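/- If a deterministic mechanism F for locating facilities on the real line is strategyproof, then for every agent i, every profile x of the other agents' locations, and every true location y of agent i, the cost agent i incurs under F(x_{-i}, y) equals the distance from y to the nearest point of agent i's image set I_i(x_{-i}); in particular, if y lies in I_i(x_{-i}), then F(x_{-i}, y) places a facility at y. -/

import Mathlib

/-!
Strategyproofness at the profile `(x_{-i}, y)` against every misreport `z` says that agent `i`'s
cost there is at most `|y - a|` for every facility `a` of every outcome `F(x_{-i}, z)`, i.e. for
every point `a` of the image set. Since `F(x_{-i}, y)` is itself one of these outcomes, its nearest
facility realises the minimum of `|y - a|` over the image set; if `y` belongs to the image set, that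
minimum is `0`.
-/

noncomputable section

def fcostK {K : ℕ} (a : ℝ) (y : Fin K → ℝ) : ℝ := ⨅ ℓ, |a - y ℓ|

def imageSet {n K : ℕ} (F : (Fin n → ℝ) → (Fin K → ℝ)) (x : Fin n → ℝ)
    (i : Fin n) : Set ℝ :=
  {a | ∃ y ℓ, F (Function.update x i y) ℓ = a}

open Function Set

section Cost

variable {K : ℕ} (a : ℝ) (y : Fin K → ℝ)

theorem fcostK_le (ℓ : Fin K) : fcostK a y ≤ |a - y ℓ| :=
  ciInf_le ⟨0, by rintro _ ⟨ℓ', rfl⟩; exact abs_nonneg _⟩ ℓ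

theorem exists_fcostK_eq [Nonempty (Fin K)] : ∃ ℓ, fcostK a y = |a - y ℓ| :=
  exists_eq_ciInf_of_finite.imp fun _ h => h.symm

theorem fcostK_of_isEmpty [IsEmpty (Fin K)] : fcostK a y = 0 :=
  Real.iInf_of_isEmpty _

end Cost

section Mechanism

variable {n K : ℕ} (F : (Fin n → ℝ) → (Fin K → ℝ))

def Strategyproof : Prop :=
  ∀ (x : Fin n → ℝ) (i : Fin n) (y : ℝ),
    fcostK (x i) (F x) ≤ fcostK (x i) (F (update x i y))

variable {F} (x : Fin n → ℝ) (i : Fin n)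

theorem apply_update_mem_imageSet (y : ℝ) (ℓ : Fin K) : F (update x i y) ℓ ∈ imageSet F x i :=
  ⟨y, ℓ, rfl⟩

theorem imageSet_eq_empty [IsEmpty (Fin K)] : imageSet F x i = ∅ :=
  eq_empty_of_forall_notMem fun _ ⟨_, ℓ, _⟩ => isEmptyElim ℓ

variable {x i}

theorem Strategyproof.fcostK_le_of_mem_imageSet (hsp : Strategyproof F) (y : ℝ) {a : ℝ}
    (ha : a ∈ imageSet F x i) : fcostK y (F (update x i y)) ≤ |y - a| := by
  obtain ⟨z, ℓ, rfl⟩ := ha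
  have hdev := hsp (update x i y) i z
  rw [update_self, update_idem] at hdev
  exact hdev.trans (fcostK_le y _ ℓ)

theorem Strategyproof.isLeast_fcostK [Nonempty (Fin K)] (hsp : Strategyproof F) (y : ℝ) :
    IsLeast ((fun a => |y - a|) '' imageSet F x i) (fcostK y (F (update x i y))) := by
  obtain ⟨ℓ, hℓ⟩ := exists_fcostK_eq y (F (update x i y))
  exact ⟨⟨_, apply_update_mem_imageSet x i y ℓ, hℓ.symm⟩,
    forall_mem_image.2 fun _ => hsp.fcostK_le_of_mem_imageSet y⟩

theorem Strategyproof.fcostK_eq_sInf (hsp : Strategyproof F) (y : ℝ) :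
    fcostK y (F (update x i y)) = sInf ((fun a => |y - a|) '' imageSet F x i) := by
  rcases isEmpty_or_nonempty (Fin K) with hK | hK
  · -- with no facilities both sides are the junk value `0` of an empty infimum
    simp [fcostK_of_isEmpty, imageSet_eq_empty]
  · exact (hsp.isLeast_fcostK y).csInf_eq.symm

theorem Strategyproof.exists_apply_eq_of_mem_imageSet (hsp : Strategyproof F) {y : ℝ}
    (hy : y ∈ imageSet F x i) : ∃ ℓ, F (update x i y) ℓ = y := by
  have : Nonempty (Fin K) := let ⟨_, ℓ, _⟩ := hy; ⟨ℓ⟩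
  obtain ⟨ℓ, hℓ⟩ := exists_fcostK_eq y (F (update x i y))
  have hzero : |y - F (update x i y) ℓ| ≤ 0 := by
    simpa [hℓ] using hsp.fcostK_le_of_mem_imageSet y hy
  exact ⟨ℓ, (sub_eq_zero.1 (abs_nonpos_iff.1 hzero)).symm⟩

end Mechanism

theorem strategyproof_cost_eq_dist_imageSet_general (n K : ℕ)
    (F : (Fin n → ℝ) → (Fin K → ℝ))
    (hsp : ∀ (x : Fin n → ℝ) (i : Fin n) (y : ℝ),
      fcostK (x i) (F x) ≤ fcostK (x i) (F (Function.update x i y)))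
    (x : Fin n → ℝ) (i : Fin n) (y : ℝ) :
    fcostK y (F (Function.update x i y)) =
      sInf ((fun a => |y - a|) '' imageSet F x i) ∧
    (y ∈ imageSet F x i → ∃ ℓ, F (Function.update x i y) ℓ = y) :=
  ⟨Strategyproof.fcostK_eq_sInf hsp y, Strategyproof.exists_apply_eq_of_mem_imageSet hsp⟩

/-- If a deterministic `K`-facility mechanism `F` on the line is strategyproof,
then for every agent `i`, every profile `x`, and every true location `y`,
the cost agent `i` incurs under `F(x_{-i}, y)` equals the infimum distance
from `y` to her image set; in particular if `y` lies in the image set, then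
`F(x_{-i}, y)` places a facility at `y`. -/
theorem strategyproof_cost_eq_dist_imageSet (n K : ℕ) (hK : 0 < K)
    (F : (Fin n → ℝ) → (Fin K → ℝ))
    (hsp : ∀ (x : Fin n → ℝ) (i : Fin n) (y : ℝ),
      fcostK (x i) (F x) ≤ fcostK (x i) (F (Function.update x i y)))
    (x : Fin n → ℝ) (i : Fin n) (y : ℝ) :
    fcostK y (F (Function.update x i y)) =
      sInf ((fun a => |y - a|) '' imageSet F x i) ∧
    (y ∈ imageSet F x i → ∃ ℓ, F (Function.update x i y) ℓ = y) :=
  strategyproof_cost_eq_dist_imageSet_general n K F hsp x i y
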